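/- arXiv:1209.6066 — 2 statements merged into one kernel-verified Lean document; each statement's English description precedes it below -/
import Mathlib

section
/- Let Ω ⊂ R² be a bounded C^{1,1} domain, D ⋐ Ω a simply connected open set with C^{1,1} boundary such that Ω \ D̄ is connected. Let P ∈ L^∞(Ω, L(M², M²)) satisfy the symmetries P_{ijkl} = P_{klij} = P_{klji} and the strong convexity PA·A ≥ γ|A|² for all symmetric A. Let w_R ∈ H²(Ω \ D̄) and w₀ ∈ H²(Ω) solve the rigid-inclusion problem and the reference Neumann problem respectively, with the same boundary couple field M̂ ∈ H^{-1/2}(∂Ω, R²) satisfying ∫_{∂Ω} M̂_i = 0. Then ∫_D P∇²w₀ · ∇²w₀ ≤ W₀ − W_R, where W₀ = ∫_Ω P∇²w₀·∇²w₀ and W_R = ∫_{Ω\D̄} P∇²w_R·∇²w_R are the works exerted by M̂. -/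
open MeasureTheory

noncomputable section

abbrev E2 := EuclideanSpace ℝ (Fin 2)

/-- The Hessian matrix `∇²w` of a scalar field on the plane. -/
def hess (w : E2 → ℝ) (x : E2) : Matrix (Fin 2) (Fin 2) ℝ :=
  Matrix.of fun i j =>
    fderiv ℝ (fun y => fderiv ℝ w y (EuclideanSpace.single j 1)) x (EuclideanSpace.single i 1)

/-- Application of the (fourth-order) plate tensor `P` to a `2×2` matrix. -/
def Papp (P : E2 → Fin 2 → Fin 2 → Fin 2 → Fin 2 → ℝ) (x : E2)
    (A : Matrix (Fin 2) (Fin 2) ℝ) : Matrix (Fin 2) (Fin 2) ℝ :=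
  Matrix.of fun i j => ∑ k, ∑ l, P x i j k l * A k l

/-- Frobenius product of `2×2` matrices. -/
def mdot (A B : Matrix (Fin 2) (Fin 2) ℝ) : ℝ := ∑ i, ∑ j, A i j * B i j

/-- The bilinear strain energy `∫_S P∇²w · ∇²v`. -/
def plateEnergy (P : E2 → Fin 2 → Fin 2 → Fin 2 → Fin 2 → ℝ) (S : Set E2)
    (w v : E2 → ℝ) : ℝ :=
  ∫ x in S, mdot (Papp P x (hess w x)) (hess v x)

/-!
Testing both weak formulations with `w_R` itself gives `∫_Ω P∇²w₀·∇²w_R = W_R`. As `∇w_R`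
vanishes on `D̄`, so does `∇²w_R` at almost every point of `D̄` (its Lebesgue density points),
hence the cross term is an integral over `Ω \ D̄` only. There, `P∇²(w₀ - w_R)·∇²(w₀ - w_R) ≥ 0`
gives `2 P∇²w₀·∇²w_R - P∇²w_R·∇²w_R ≤ P∇²w₀·∇²w₀`; integrating,
`W_R ≤ ∫_{Ω\D̄} P∇²w₀·∇²w₀ ≤ W₀ - ∫_D P∇²w₀·∇²w₀`, the last step by positivity of `P`.
-/

section FrobeniusForm

lemma mdot_sub_left (A B C : Matrix (Fin 2) (Fin 2) ℝ) : mdot (A - B) C = mdot A C - mdot B C := by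
  simp [mdot, sub_mul, Finset.sum_sub_distrib]

lemma mdot_sub_right (A B C : Matrix (Fin 2) (Fin 2) ℝ) : mdot A (B - C) = mdot A B - mdot A C := by
  simp [mdot, mul_sub, Finset.sum_sub_distrib]

lemma mdot_zero_right (A : Matrix (Fin 2) (Fin 2) ℝ) : mdot A 0 = 0 := by
  simp [mdot]

lemma mdot_self_nonneg (A : Matrix (Fin 2) (Fin 2) ℝ) : 0 ≤ mdot A A :=
  Finset.sum_nonneg fun _ _ => Finset.sum_nonneg fun _ _ => mul_self_nonneg _

variable (P : E2 → Fin 2 → Fin 2 → Fin 2 → Fin 2 → ℝ) (x : E2)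

lemma Papp_sub (A B : Matrix (Fin 2) (Fin 2) ℝ) : Papp P x (A - B) = Papp P x A - Papp P x B := by
  ext i j
  simp [Papp, mul_sub, Finset.sum_sub_distrib]

lemma mdot_Papp_comm (hsym : ∀ i j k l, P x i j k l = P x k l i j)
    (A B : Matrix (Fin 2) (Fin 2) ℝ) : mdot (Papp P x A) B = mdot (Papp P x B) A := by
  simp only [mdot, Papp, Matrix.of_apply, Fin.sum_univ_two, hsym 0 1 0 0, hsym 1 0 0 0,
    hsym 1 1 0 0, hsym 1 0 0 1, hsym 1 1 0 1, hsym 1 1 1 0]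
  ring

lemma mdot_Papp_self_nonneg {γ : ℝ} (hγ : 0 < γ) {A : Matrix (Fin 2) (Fin 2) ℝ}
    (hconv : γ * mdot A A ≤ mdot (Papp P x A) A) : 0 ≤ mdot (Papp P x A) A :=
  (mul_nonneg hγ.le (mdot_self_nonneg A)).trans hconv

lemma two_mul_mdot_Papp_sub_le (hsym : ∀ i j k l, P x i j k l = P x k l i j)
    {A B : Matrix (Fin 2) (Fin 2) ℝ} (hAB : 0 ≤ mdot (Papp P x (A - B)) (A - B)) :
    2 * mdot (Papp P x A) B - mdot (Papp P x B) B ≤ mdot (Papp P x A) A := by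
  rw [Papp_sub, mdot_sub_left, mdot_sub_right, mdot_sub_right,
    mdot_Papp_comm P x hsym B A] at hAB
  linarith

end FrobeniusForm

section Hessian

lemma ContDiff.differentiable_fderiv {𝕜 E F : Type*} [NontriviallyNormedField 𝕜]
    [NormedAddCommGroup E] [NormedSpace 𝕜 E] [NormedAddCommGroup F] [NormedSpace 𝕜 F]
    {f : E → F} {n : WithTop ℕ∞} (hf : ContDiff 𝕜 n f) (hn : 2 ≤ n) :
    Differentiable 𝕜 (fderiv 𝕜 f) :=
  (hf.fderiv_right (m := 1) hn).differentiable one_ne_zero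

lemma hess_apply {w : E2 → ℝ} {x : E2} (hw : DifferentiableAt ℝ (fderiv ℝ w) x) (i j : Fin 2) :
    hess w x i j =
      fderiv ℝ (fderiv ℝ w) x (EuclideanSpace.single i 1) (EuclideanSpace.single j 1) := by
  simp [hess, (hw.hasFDerivAt.clm_apply (hasFDerivAt_const _ x)).fderiv]

lemma hess_isSymm {w : E2 → ℝ} (hw : ContDiff ℝ 2 w) (x : E2) : (hess w x).IsSymm := by
  have hdiff : DifferentiableAt ℝ (fderiv ℝ w) x := hw.differentiable_fderiv le_rfl x
  have hsym : IsSymmSndFDerivAt ℝ w x :=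
    hw.contDiffAt.isSymmSndFDerivAt (by simp [minSmoothness_of_isRCLikeNormedField])
  ext i j
  rw [Matrix.transpose_apply, hess_apply hdiff, hess_apply hdiff]
  exact hsym _ _

lemma ae_fderiv_eq_zero_of_eqOn_zero {E : Type*} [NormedAddCommGroup E] [NormedSpace ℝ E]
    [FiniteDimensional ℝ E] [MeasurableSpace E] [BorelSpace E] (μ : Measure E)
    [μ.IsAddHaarMeasure] {f : E → ℝ} {s : Set E} (hs : MeasurableSet s)
    (hf : ∀ x ∈ s, DifferentiableAt ℝ f x) (h0 : s.EqOn f 0) :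
    ∀ᵐ x ∂μ, x ∈ s → fderiv ℝ f x = 0 := by
  rcases subsingleton_or_nontrivial E with hE | hE
  · exact Filter.Eventually.of_forall fun x _ => Subsingleton.elim _ _
  obtain ⟨v, hv⟩ := exists_ne (0 : E)
  -- The density-point estimate `ApproximatesLinearOn.norm_fderiv_sub_le` is about maps `E → E`,
  -- hence the detour through `y ↦ f y • v`.
  have happrox : ApproximatesLinearOn (fun y => f y • v) (0 : E →L[ℝ] E) s 0 := by
    intro y hy z hz
    simp [h0 hy, h0 hz]
  have hderiv := happrox.norm_fderiv_sub_le μ hs (fun y => (fderiv ℝ f y).smulRight v)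
    fun y hy => ((hf y hy).hasFDerivAt.smul_const v).hasFDerivWithinAt
  filter_upwards [ae_imp_of_ae_restrict hderiv] with x hx hxs
  simpa [hv] using hx hxs

lemma ae_hess_eq_zero_of_eqOn_fderiv_zero {w : E2 → ℝ} (hw : Differentiable ℝ (fderiv ℝ w))
    {s : Set E2} (hs : MeasurableSet s) (h0 : s.EqOn (fderiv ℝ w) 0) :
    ∀ᵐ x, x ∈ s → hess w x = 0 := by
  have hcol : ∀ j : Fin 2, ∀ᵐ x, x ∈ s →
      fderiv ℝ (fun y => fderiv ℝ w y (EuclideanSpace.single j 1)) x = 0 := fun j =>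
    ae_fderiv_eq_zero_of_eqOn_zero volume hs
      (fun x _ => (hw x).clm_apply (differentiableAt_const _)) fun x hx => by simp [h0 hx]
  filter_upwards [ae_all_iff.2 hcol] with x hx hxs
  ext i j
  simp [hess, hx j hxs]

end Hessian

section SetIntegral

variable {α : Type*} [MeasurableSpace α] {μ : Measure α}

lemma setIntegral_le_of_two_mul_sub_le {f g c : α → ℝ} {S : Set α} (hS : MeasurableSet S)
    (hf : IntegrableOn f S μ) (hg : IntegrableOn g S μ) (hf0 : ∀ x ∈ S, 0 ≤ f x)
    (hle : ∀ x ∈ S, 2 * c x - g x ≤ f x) (hcg : ∫ x in S, c x ∂μ = ∫ x in S, g x ∂μ) :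
    ∫ x in S, g x ∂μ ≤ ∫ x in S, f x ∂μ := by
  by_cases hc : IntegrableOn c S μ
  · have hint : ∫ x in S, (2 * c x - g x) ∂μ ≤ ∫ x in S, f x ∂μ :=
      setIntegral_mono_on ((hc.const_mul 2).sub hg) hf hS hle
    rw [integral_sub (hc.const_mul 2) hg, integral_const_mul, hcg] at hint
    linarith
  · -- a non-integrable `c` has integral `0`, hence so does `g`
    rw [← hcg, integral_undef hc]
    exact setIntegral_nonneg hS hf0

lemma setIntegral_add_setIntegral_le {f : α → ℝ} {Ω D S : Set α} (hΩ : MeasurableSet Ω)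
    (hS : MeasurableSet S) (hDS : Disjoint D S) (hDΩ : D ⊆ Ω) (hSΩ : S ⊆ Ω)
    (hf : IntegrableOn f Ω μ) (hf0 : ∀ x ∈ Ω, 0 ≤ f x) :
    ∫ x in D, f x ∂μ + ∫ x in S, f x ∂μ ≤ ∫ x in Ω, f x ∂μ := by
  rw [← setIntegral_union hDS hS (hf.mono_set hDΩ) (hf.mono_set hSΩ)]
  exact setIntegral_mono_set hf ((ae_restrict_iff' hΩ).2 (ae_of_all _ hf0))
    (Set.union_subset hDΩ hSΩ).eventuallyLE

end SetIntegral

theorem energy_lemma_rigid_inclusion_general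
    (Ω D : Set E2) (hΩopen : IsOpen Ω)
    (hDΩ : closure D ⊆ Ω)
    (P : E2 → Fin 2 → Fin 2 → Fin 2 → Fin 2 → ℝ) (γ : ℝ) (hγ : 0 < γ)
    (hPsym : ∀ x, ∀ i j k l, P x i j k l = P x k l i j ∧ P x i j k l = P x k l j i)
    (hPconv : ∀ x, ∀ A : Matrix (Fin 2) (Fin 2) ℝ, A.IsSymm →
      γ * mdot A A ≤ mdot (Papp P x A) A)
    (ℓ : (E2 → ℝ) →ₗ[ℝ] ℝ)
    (w₀ wR : E2 → ℝ) (hw₀ : ContDiff ℝ 2 w₀) (hwR : ContDiff ℝ 2 wR)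
    -- the reference solution: weak formulation of the Neumann problem in `Ω`
    (hweak₀ : ∀ v : E2 → ℝ, ContDiff ℝ 2 v → plateEnergy P Ω w₀ v = ℓ v)
    -- the rigid-inclusion solution: weak formulation in `Ω \ D̄` with test functions
    -- vanishing (together with their gradient) on the rigid inclusion
    (hweakR : ∀ v : E2 → ℝ, ContDiff ℝ 2 v →
      (∀ x ∈ closure D, v x = 0 ∧ fderiv ℝ v x = 0) →
      plateEnergy P (Ω \ closure D) wR v = ℓ v)
    -- normalization: `w_R` coincides with the (zero) affine function on `D̄`
    (hR0 : ∀ x ∈ closure D, wR x = 0 ∧ fderiv ℝ wR x = 0)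
    -- integrability of the energy densities
    (hint₀ : IntegrableOn (fun x => mdot (Papp P x (hess w₀ x)) (hess w₀ x)) Ω)
    (hintR : IntegrableOn (fun x => mdot (Papp P x (hess wR x)) (hess wR x)) (Ω \ closure D)) :
    plateEnergy P D w₀ w₀ ≤
      plateEnergy P Ω w₀ w₀ - plateEnergy P (Ω \ closure D) wR wR := by
  have hΩ := hΩopen.measurableSet
  have hS : MeasurableSet (Ω \ closure D) := hΩ.diff isClosed_closure.measurableSet
  have hpos : ∀ x, ∀ A, A.IsSymm → 0 ≤ mdot (Papp P x A) A := fun x A hA =>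
    mdot_Papp_self_nonneg P x hγ (hPconv x A hA)
  have hexpand : ∀ x, 2 * mdot (Papp P x (hess w₀ x)) (hess wR x)
      - mdot (Papp P x (hess wR x)) (hess wR x) ≤ mdot (Papp P x (hess w₀ x)) (hess w₀ x) :=
    fun x => two_mul_mdot_Papp_sub_le P x (fun i j k l => (hPsym x i j k l).1)
      (hpos x _ ((hess_isSymm hw₀ x).sub (hess_isSymm hwR x)))
  have hhessR : ∀ᵐ x, x ∈ closure D → hess wR x = 0 :=
    ae_hess_eq_zero_of_eqOn_fderiv_zero (hwR.differentiable_fderiv le_rfl)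
      isClosed_closure.measurableSet fun x hx => (hR0 x hx).2
  have hwork : ∫ x in Ω \ closure D, mdot (Papp P x (hess w₀ x)) (hess wR x) =
      plateEnergy P (Ω \ closure D) wR wR := by
    rw [← setIntegral_eq_of_subset_of_ae_sdiff_eq_zero hΩ.nullMeasurableSet Set.sdiff_subset
      (by filter_upwards [hhessR] with x hx hxΩ
          simp [hx (not_not.1 fun h => hxΩ.2 ⟨hxΩ.1, h⟩), mdot_zero_right])]
    exact (hweak₀ wR hwR).trans (hweakR wR hwR hR0).symm
  have hsplit := setIntegral_add_setIntegral_le (D := D) hΩ hS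
    (Set.disjoint_sdiff_right.mono_left subset_closure)
    (subset_closure.trans hDΩ) Set.sdiff_subset hint₀ fun x _ => hpos x _ (hess_isSymm hw₀ x)
  have hcompare := setIntegral_le_of_two_mul_sub_le hS (hint₀.mono_set Set.sdiff_subset) hintR
    (fun x _ => hpos x _ (hess_isSymm hw₀ x)) (fun x _ => hexpand x) hwork
  unfold plateEnergy at *
  linarith

/-- Energy lemma for a rigid inclusion: `∫_D P∇²w₀·∇²w₀ ≤ W₀ − W_R`, where
`W₀ = ∫_Ω P∇²w₀·∇²w₀` and `W_R = ∫_{Ω\D̄} P∇²w_R·∇²w_R` are the works exerted by the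
boundary couple field, represented by the linear load functional `ℓ` of its weak
formulation. -/
theorem energy_lemma_rigid_inclusion
    (Ω D : Set E2) (hΩopen : IsOpen Ω) (hΩconn : IsConnected Ω)
    (hΩbd : Bornology.IsBounded Ω)
    (hDopen : IsOpen D) (hDconn : IsConnected D) (hDΩ : closure D ⊆ Ω)
    (hconn : IsConnected (Ω \ closure D))
    (P : E2 → Fin 2 → Fin 2 → Fin 2 → Fin 2 → ℝ) (γ K : ℝ) (hγ : 0 < γ)
    (hPbd : ∀ x, ∀ i j k l, |P x i j k l| ≤ K)
    (hPsym : ∀ x, ∀ i j k l, P x i j k l = P x k l i j ∧ P x i j k l = P x k l j i)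
    (hPconv : ∀ x, ∀ A : Matrix (Fin 2) (Fin 2) ℝ, A.IsSymm →
      γ * mdot A A ≤ mdot (Papp P x A) A)
    (ℓ : (E2 → ℝ) →ₗ[ℝ] ℝ)
    (w₀ wR : E2 → ℝ) (hw₀ : ContDiff ℝ 2 w₀) (hwR : ContDiff ℝ 2 wR)
    -- the reference solution: weak formulation of the Neumann problem in `Ω`
    (hweak₀ : ∀ v : E2 → ℝ, ContDiff ℝ 2 v → plateEnergy P Ω w₀ v = ℓ v)
    -- the rigid-inclusion solution: weak formulation in `Ω \ D̄` with test functions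
    -- vanishing (together with their gradient) on the rigid inclusion
    (hweakR : ∀ v : E2 → ℝ, ContDiff ℝ 2 v →
      (∀ x ∈ closure D, v x = 0 ∧ fderiv ℝ v x = 0) →
      plateEnergy P (Ω \ closure D) wR v = ℓ v)
    -- normalization: `w_R` coincides with the (zero) affine function on `D̄`
    (hR0 : ∀ x ∈ closure D, wR x = 0 ∧ fderiv ℝ wR x = 0)
    -- integrability of the energy densities
    (hint₀ : IntegrableOn (fun x => mdot (Papp P x (hess w₀ x)) (hess w₀ x)) Ω)
    (hintR : IntegrableOn (fun x => mdot (Papp P x (hess wR x)) (hess wR x)) (Ω \ closure D)) :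
    plateEnergy P D w₀ w₀ ≤
      plateEnergy P Ω w₀ w₀ - plateEnergy P (Ω \ closure D) wR wR :=
  energy_lemma_rigid_inclusion_general Ω D hΩopen hDΩ P γ hγ hPsym hPconv ℓ w₀ wR hw₀ hwR hweak₀
    hweakR hR0 hint₀ hintR

end
end

section
/- Let D ⊂ R² be a bounded domain with Lipschitz boundary with constants rρ₀, L and diam(D) ≤ Q r ρ₀. Then the perimeter satisfies |∂D| ≤ C area(D)/(rρ₀), where C > 0 depends only on L (and Q). -/
/-!
Cover `∂D` by the balls `B(x, δ)`, `δ = rρ₀`, centred at a maximal `δ/2`-separated set of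
boundary points. In each such ball `∂D` lies on the graph of an `L`-Lipschitz function over a
segment of length `2δ`, so it has length at most `2(1 + L)δ`. The disc
`B(x + (δ/8)e, δ/(8(1 + L)))`, with `e` the local vertical direction at `x`, lies in
`D ∩ B(x, δ/4)`, and by separation these discs are pairwise disjoint. Counting the balls twice
gives `|∂D| · π δ² / (64(1 + L)²) ≤ 2(1 + L)δ · area(D)`.
-/

open MeasureTheory Metric Module
open scoped ENNReal NNReal RealInnerProductSpace

noncomputable section

/-- `D` has Lipschitz boundary with constants `δ`, `L`. -/
def HasLipschitzBoundary {n : ℕ} (D : Set (EuclideanSpace ℝ (Fin n))) (δ L : ℝ) : Prop :=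
  ∀ p ∈ frontier D, ∃ (e : EuclideanSpace ℝ (Fin n)) (ψ : EuclideanSpace ℝ (Fin n) → ℝ),
    ‖e‖ = 1 ∧ LipschitzWith (Real.toNNReal L) ψ ∧
    ∀ x ∈ ball p δ,
      (x ∈ D ↔ (inner ℝ (x - p) e : ℝ) > ψ (x - p - (inner ℝ (x - p) e : ℝ) • e))

lemma TotallyBounded.exists_finite_separated_cover {X : Type*} [PseudoMetricSpace X] {A : Set X}
    (hA : TotallyBounded A) {ε : ℝ} (hε : 0 < ε) :
    ∃ S ⊆ A, S.Finite ∧ S.Pairwise (fun x y => ε < dist x y) ∧ A ⊆ ⋃ x ∈ S, closedBall x ε := by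
  lift ε to ℝ≥0 using hε.le
  obtain ⟨N, -, hNfin, hN⟩ :=
    exists_finite_isCover_of_totallyBounded (ε := ε / 2) (by simpa using hε.ne') hA
  have hpack : packingNumber ε A ≠ ⊤ := by
    have h := packingNumber_two_mul_le_externalCoveringNumber (ε / 2) A
    rw [mul_div_cancel₀ _ two_ne_zero] at h
    exact ne_top_of_le_ne_top hNfin.encard_lt_top.ne (h.trans hN.externalCoveringNumber_le_encard)
  refine ⟨maximalSeparatedSet ε A, maximalSeparatedSet_subset, ?_, fun x hx y hy hxy => ?_,
    (isCover_maximalSeparatedSet hpack).subset_iUnion_closedBall⟩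
  · rw [← Set.encard_ne_top_iff, encard_maximalSeparatedSet hpack]
    exact hpack
  · have : (ε : ℝ≥0∞) < edist x y := isSeparated_maximalSeparatedSet hx hy hxy
    rw [edist_dist, ← ENNReal.ofReal_coe_nnreal] at this
    exact (ENNReal.ofReal_lt_ofReal_iff_of_nonneg ε.2).1 this

lemma TotallyBounded.measure_mul_le_of_packing {X : Type*} [PseudoMetricSpace X]
    [MeasurableSpace X] (ν μ : Measure X) {F D : Set X} (hF : TotallyBounded F) {δ : ℝ}
    (hδ : 0 < δ) {a b : ℝ≥0∞} (hν : ∀ x ∈ F, ν (F ∩ ball x δ) ≤ a)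
    (hμ : ∀ x ∈ F, ∃ U ⊆ D ∩ ball x (δ / 4), MeasurableSet U ∧ b ≤ μ U) :
    ν F * b ≤ a * μ D := by
  obtain ⟨S, hSF, hSfin, hSsep, hScov⟩ := hF.exists_finite_separated_cover (half_pos hδ)
  lift S to Finset X using hSfin
  choose! U hUD hUmeas hUb using hμ
  have hcover : F ⊆ ⋃ x ∈ S, F ∩ ball x δ := fun y hy => by
    obtain ⟨x, hxS, hyx⟩ := Set.mem_iUnion₂.1 (hScov hy)
    exact Set.mem_iUnion₂.2 ⟨x, hxS, hy, closedBall_subset_ball (half_lt_self hδ) hyx⟩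
  have hdisj : (S : Set X).PairwiseDisjoint U := fun x hx y hy hxy =>
    Set.disjoint_left.2 fun z hzx hzy => by
      have hx' := ((hUD x (hSF hx)) hzx).2
      have hy' := ((hUD y (hSF hy)) hzy).2
      have := hSsep hx hy hxy
      rw [mem_ball] at hx' hy'
      linarith [dist_triangle_left x y z]
  calc ν F * b ≤ (∑ x ∈ S, ν (F ∩ ball x δ)) * b :=
        mul_le_mul_left ((measure_mono hcover).trans (measure_biUnion_finset_le _ _)) _
    _ ≤ (∑ _x ∈ S, a) * b := mul_le_mul_left (Finset.sum_le_sum fun x hx => hν x (hSF hx)) _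
    _ = a * ∑ _x ∈ S, b := by simp only [Finset.sum_const, nsmul_eq_mul]; ring
    _ ≤ a * ∑ x ∈ S, μ (U x) :=
        mul_le_mul_right (Finset.sum_le_sum fun x hx => hUb x (hSF hx)) _
    _ = a * μ (⋃ x ∈ S, U x) := by
        rw [measure_biUnion_finset hdisj fun x hx => hUmeas x (hSF hx)]
    _ ≤ a * μ D := mul_le_mul_right (measure_mono (Set.iUnion₂_subset fun x hx =>
        fun z hz => (hUD x (hSF hx) hz).1)) _

section InnerProductSpace

variable {E : Type*} [NormedAddCommGroup E] [InnerProductSpace ℝ E]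

lemma inner_sub_inner_smul_self {e : E} (he : ‖e‖ = 1) (z : E) : ⟪z - ⟪z, e⟫ • e, e⟫ = 0 := by
  simp [inner_sub_left, real_inner_smul_left, he]

lemma norm_sub_inner_smul_le {e : E} (he : ‖e‖ = 1) (z : E) : ‖z - ⟪z, e⟫ • e‖ ≤ ‖z‖ := by
  have hsq : ‖z - ⟪z, e⟫ • e‖ ^ 2 = ‖z‖ ^ 2 - ⟪z, e⟫ ^ 2 := by
    rw [norm_sub_sq_real, real_inner_smul_right, norm_smul, he, mul_one, Real.norm_eq_abs,
      sq_abs]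
    ring
  refine (pow_le_pow_iff_left₀ (norm_nonneg _) (norm_nonneg _) two_ne_zero).1 ?_
  rw [hsq]
  linarith [sq_nonneg ⟪z, e⟫]

lemma lipschitzWith_smul_right_of_norm_eq_one {v : E} (hv : ‖v‖ = 1) :
    LipschitzWith 1 (fun a : ℝ => a • v) :=
  LipschitzWith.of_dist_le_mul fun a b => by
    simp [dist_eq_norm, ← sub_smul, norm_smul, hv]

lemma exists_norm_eq_one_eq_inner_smul_of_inner_eq_zero [Fact (finrank ℝ E = 2)] {e : E}
    (he : ‖e‖ = 1) :
    ∃ v : E, ‖v‖ = 1 ∧ ∀ y : E, ⟪y, e⟫ = 0 → y = ⟪y, v⟫ • v := by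
  have := FiniteDimensional.of_fact_finrank_eq_two (K := ℝ) (V := E)
  let o : Orientation ℝ E (Fin 2) := (finBasisOfFinrankEq ℝ E Fact.out).orientation
  refine ⟨o.rightAngleRotation e, by simp [he], fun y hy => ext_inner_right ℝ fun z => ?_⟩
  have := o.inner_mul_inner_add_areaForm_mul_areaForm e y z
  rw [real_inner_comm, hy, he] at this
  rw [real_inner_smul_left, o.inner_rightAngleRotation_right, o.inner_rightAngleRotation_left,
    o.areaForm_swap y e]
  linarith

lemma hausdorffMeasure_image_graph_le [MeasurableSpace E] [BorelSpace E] {e v : E}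
    (he : ‖e‖ = 1) (hv : ‖v‖ = 1) {ψ : E → ℝ} {K : ℝ≥0} (hψ : LipschitzWith K ψ) (p : E)
    (s : Set ℝ) :
    μH[1] ((fun a : ℝ => p + a • v + ψ (a • v) • e) '' s) ≤ (1 + K) * volume s := by
  have hline := lipschitzWith_smul_right_of_norm_eq_one hv
  have hgraph : LipschitzWith (1 + K) fun a : ℝ => p + a • v + ψ (a • v) • e := by
    simpa using ((LipschitzWith.const p).add hline).add
      ((lipschitzWith_smul_right_of_norm_eq_one he).comp (hψ.comp hline))
  simpa [hausdorffMeasure_real] using hgraph.hausdorffMeasure_image_le zero_le_one s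

def IsSupergraphOnBall (D : Set E) (p e : E) (ψ : E → ℝ) (δ : ℝ) : Prop :=
  ∀ x ∈ ball p δ, (x ∈ D ↔ ⟪x - p, e⟫ > ψ (x - p - ⟪x - p, e⟫ • e))

namespace IsSupergraphOnBall

variable {D : Set E} {p e : E} {ψ : E → ℝ} {δ : ℝ} {K : ℝ≥0}

lemma frontier_inter_ball_subset (h : IsSupergraphOnBall D p e ψ δ) (hD : IsOpen D)
    (hψ : Continuous ψ) :
    frontier D ∩ ball p δ ⊆ {x | ⟪x - p, e⟫ = ψ (x - p - ⟪x - p, e⟫ • e)} := by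
  rintro x ⟨hxD, hxδ⟩
  have hF : Continuous fun y => ψ (y - p - ⟪y - p, e⟫ • e) - ⟪y - p, e⟫ := by fun_prop
  have hle : ⟪x - p, e⟫ ≤ ψ (x - p - ⟪x - p, e⟫ • e) :=
    not_lt.1 fun hlt => hxD.2 (hD.interior_eq.symm ▸ (h x hxδ).2 hlt)
  have hge : x ∈ {y | ψ (y - p - ⟪y - p, e⟫ • e) - ⟪y - p, e⟫ ≤ 0} := by
    refine closure_minimal (fun y hy => ?_) (isClosed_le hF continuous_const)
      (isOpen_ball.inter_closure ⟨hxδ, hxD.1⟩)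
    exact sub_nonpos.2 ((h y hy.1).1 hy.2).le
  exact le_antisymm hle (by simpa [sub_nonpos] using hge)

lemma apply_zero_eq_zero (h : IsSupergraphOnBall D p e ψ δ) (hD : IsOpen D) (hψ : Continuous ψ)
    (hp : p ∈ frontier D) (hδ : 0 < δ) : ψ 0 = 0 := by
  simpa using (h.frontier_inter_ball_subset hD hψ ⟨hp, mem_ball_self hδ⟩).symm

lemma ball_subset_inter_ball (h : IsSupergraphOnBall D p e ψ δ) (he : ‖e‖ = 1)
    (hψ : LipschitzWith K ψ) (hψ0 : ψ 0 = 0) {s : ℝ} (hs : 0 ≤ s) (hsδ : 2 * s ≤ δ) :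
    ball (p + s • e) (s / (1 + K)) ⊆ D ∩ ball p (2 * s) := by
  intro x hx
  set y := x - (p + s • e)
  have hK : (0 : ℝ) < 1 + K := by positivity
  have hy : (1 + K) * ‖y‖ < s := by
    rw [mem_ball, dist_eq_norm, lt_div_iff₀ hK] at hx
    linarith
  have hxp : x - p = y + s • e := by simp only [y]; abel
  have hx2s : x ∈ ball p (2 * s) := by
    rw [mem_ball, dist_eq_norm, hxp]
    calc ‖y + s • e‖ ≤ ‖y‖ + s := by
          simpa [norm_smul, he, abs_of_nonneg hs] using norm_add_le y (s • e)
      _ < 2 * s := by nlinarith [norm_nonneg y, K.coe_nonneg]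
  have hheight : ⟪x - p, e⟫ = ⟪y, e⟫ + s := by
    simp [hxp, inner_add_left, real_inner_smul_left, he]
  have hfoot : x - p - ⟪x - p, e⟫ • e = y - ⟪y, e⟫ • e := by
    rw [hheight, add_smul, hxp]
    abel
  have hψy : ψ (y - ⟪y, e⟫ • e) ≤ K * ‖y‖ := by
    have := hψ.dist_le_mul (y - ⟪y, e⟫ • e) 0
    rw [Real.dist_eq, hψ0, sub_zero, dist_zero_right] at this
    exact (le_abs_self _).trans
      (this.trans (mul_le_mul_of_nonneg_left (norm_sub_inner_smul_le he y) K.coe_nonneg))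
  have hinner : -‖y‖ ≤ ⟪y, e⟫ := by
    have := abs_real_inner_le_norm y e
    rw [he, mul_one] at this
    exact (abs_le.1 this).1
  refine ⟨(h x (ball_subset_ball hsδ hx2s)).2 ?_, hx2s⟩
  rw [hfoot, hheight]
  linarith

lemma frontier_inter_ball_subset_image [Fact (finrank ℝ E = 2)]
    (h : IsSupergraphOnBall D p e ψ δ) (hD : IsOpen D) (he : ‖e‖ = 1) (hψ : Continuous ψ) :
    ∃ v : E, ‖v‖ = 1 ∧
      frontier D ∩ ball p δ ⊆ (fun a : ℝ => p + a • v + ψ (a • v) • e) '' Set.Icc (-δ) δ := by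
  obtain ⟨v, hv, hspan⟩ := exists_norm_eq_one_eq_inner_smul_of_inner_eq_zero he
  refine ⟨v, hv, fun x hx => ⟨⟪x - p - ⟪x - p, e⟫ • e, v⟫, ?_, ?_⟩⟩
  · have := abs_real_inner_le_norm (x - p - ⟪x - p, e⟫ • e) v
    rw [hv, mul_one] at this
    have hxδ : ‖x - p‖ < δ := mem_ball_iff_norm.1 hx.2
    exact abs_le.1 ((this.trans (norm_sub_inner_smul_le he _)).trans hxδ.le)
  · set y := x - p - ⟪x - p, e⟫ • e with hy
    have hyv : ⟪y, v⟫ • v = y := (hspan y (inner_sub_inner_smul_self he _)).symm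
    have hheight : ⟪x - p, e⟫ = ψ y := h.frontier_inter_ball_subset hD hψ hx
    show p + ⟪y, v⟫ • v + ψ (⟪y, v⟫ • v) • e = x
    rw [hyv, ← hheight, hy]
    abel

lemma hausdorffMeasure_frontier_inter_ball_le [MeasurableSpace E] [BorelSpace E]
    [Fact (finrank ℝ E = 2)] (h : IsSupergraphOnBall D p e ψ δ) (hD : IsOpen D) (he : ‖e‖ = 1)
    (hψ : LipschitzWith K ψ) :
    μH[1] (frontier D ∩ ball p δ) ≤ (1 + K) * ENNReal.ofReal (2 * δ) := by
  obtain ⟨v, hv, hsub⟩ := h.frontier_inter_ball_subset_image hD he hψ.continuous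
  calc μH[1] (frontier D ∩ ball p δ) ≤ (1 + K) * volume (Set.Icc (-δ) δ) :=
        (measure_mono hsub).trans (hausdorffMeasure_image_graph_le he hv hψ p _)
    _ = (1 + K) * ENNReal.ofReal (2 * δ) := by rw [Real.volume_Icc]; ring_nf

end IsSupergraphOnBall

end InnerProductSpace

lemma HasLipschitzBoundary.hausdorffMeasure_frontier_mul_le {D : Set (EuclideanSpace ℝ (Fin 2))}
    {δ L : ℝ} (hLip : HasLipschitzBoundary D δ L) (hD : IsOpen D) (hDb : Bornology.IsBounded D)
    (hδ : 0 < δ) :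
    μH[1] (frontier D) *
        (ENNReal.ofReal (δ / 8 / (1 + L.toNNReal)) ^ 2 * ENNReal.ofReal Real.pi) ≤
      (1 + L.toNNReal) * ENNReal.ofReal (2 * δ) * volume D := by
  have : Fact (finrank ℝ (EuclideanSpace ℝ (Fin 2)) = 2) := ⟨finrank_euclideanSpace_fin⟩
  have hfrontier : IsCompact (frontier D) :=
    hDb.isCompact_closure.of_isClosed_subset isClosed_frontier frontier_subset_closure
  refine hfrontier.totallyBounded.measure_mul_le_of_packing μH[1] volume hδ
    (fun p hp => ?_) (fun p hp => ?_)
  · obtain ⟨e, ψ, he, hψ, h⟩ := hLip p hp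
    exact IsSupergraphOnBall.hausdorffMeasure_frontier_inter_ball_le h hD he hψ
  · obtain ⟨e, ψ, he, hψ, h⟩ := hLip p hp
    have hψ0 := IsSupergraphOnBall.apply_zero_eq_zero h hD hψ.continuous hp hδ
    have hsub := IsSupergraphOnBall.ball_subset_inter_ball h he hψ hψ0 (s := δ / 8)
      (by positivity) (by linarith)
    rw [show 2 * (δ / 8) = δ / 4 by ring] at hsub
    exact ⟨_, hsub, measurableSet_ball, (EuclideanSpace.volume_ball_fin_two _ _).ge⟩

theorem perimeter_le_area_general (L Q : ℝ) :
    ∃ C > 0, ∀ (D : Set (EuclideanSpace ℝ (Fin 2))) (r ρ₀ : ℝ),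
      0 < r → 0 < ρ₀ →
      IsOpen D → IsConnected D → Bornology.IsBounded D →
      HasLipschitzBoundary D (r * ρ₀) L →
      Metric.diam D ≤ Q * r * ρ₀ →
      (μH[1] (frontier D)).toReal ≤ C * (volume D).toReal / (r * ρ₀) := by
  refine ⟨128 * (1 + L.toNNReal) ^ 3 / Real.pi, by positivity, ?_⟩
  intro D r ρ₀ hr hρ₀ hD _ hDb hLip _
  set δ := r * ρ₀
  have hδ : 0 < δ := mul_pos hr hρ₀
  have hρ : 0 ≤ δ / 8 / (1 + L.toNNReal) := by positivity
  have hbound := ENNReal.toReal_mono (ENNReal.mul_ne_top (by finiteness) hDb.measure_lt_top.ne)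
    (hLip.hausdorffMeasure_frontier_mul_le hD hDb hδ)
  simp only [ENNReal.toReal_mul, ENNReal.toReal_pow, ENNReal.toReal_ofReal hρ,
    ENNReal.toReal_ofReal Real.pi_pos.le, ENNReal.toReal_ofReal (by positivity : 0 ≤ 2 * δ),
    ENNReal.toReal_add ENNReal.one_ne_top ENNReal.coe_ne_top, ENNReal.toReal_one,
    ENNReal.coe_toReal] at hbound
  field_simp at hbound
  rw [le_div_iff₀ hδ, div_mul_eq_mul_div, le_div_iff₀ Real.pi_pos]
  linarith

/-- Isoperimetric-type estimate: for a plane Lipschitz domain with constants `rρ₀`, `L`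
and `diam(D) ≤ Q r ρ₀`, the perimeter (1-dimensional Hausdorff measure of `∂D`)
satisfies `|∂D| ≤ C area(D)/(rρ₀)`, with `C` depending only on `L` and `Q`. -/
theorem perimeter_le_area (L Q : ℝ) (hL : 0 < L) (hQ : 0 < Q) :
    ∃ C > 0, ∀ (D : Set (EuclideanSpace ℝ (Fin 2))) (r ρ₀ : ℝ),
      0 < r → 0 < ρ₀ →
      IsOpen D → IsConnected D → Bornology.IsBounded D →
      HasLipschitzBoundary D (r * ρ₀) L →
      Metric.diam D ≤ Q * r * ρ₀ →
      (μH[1] (frontier D)).toReal ≤ C * (volume D).toReal / (r * ρ₀) :=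
  perimeter_le_area_general L Q
end
end
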